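/- Covariance of STFT under A-translation and A-modulation: for f, g ∈ L²(ℝ) and ξ, η ∈ ℝ, V_g(T_ξ^A M_η^A f)(x, ω) = ρ_A(−η) e^{−2πiξω} V_g f(x − ξ, ω + (aξ − η)/b), where T_ξ^A f(t) = e^{−2πi(a/b)ξ(t−ξ)}f(t−ξ), M_η^A f(t) = e^{(πi/b)(aη² − 2pη + 2ηt)} f(t), ρ_A(t) = e^{(πi/b)(at²+2pt)}. In particular |V_g(T_ξ^A M_η^A f)(x,ω)| = |V_g f(x−ξ, ω + (aξ−η)/b)|. -/

import Mathlib

open MeasureTheory Complex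

noncomputable def STFT (g f : ℝ → ℂ) (x ω : ℝ) : ℂ :=
  ∫ t : ℝ, f t * (starRingEnd ℂ) (g (t - x)) * Complex.exp (-2 * Real.pi * Complex.I * ω * t)

noncomputable def rhoA (a b p : ℝ) (t : ℝ) : ℂ :=
  Complex.exp ((Real.pi * Complex.I / b) * (a * t ^ 2 + 2 * p * t))

/-
The A-translation followed by the A-modulation is, up to the unimodular constant `rhoA a b p (-η)`,
an ordinary translation by `ξ` of an ordinary modulation of frequency `(η - a ξ) / b`. The STFT
turns a translation into a shift in time together with the phase `e^{-2πiξω}` (substitute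
`t ↦ t + ξ`), and a modulation into a shift in frequency.
-/

theorem STFT_const_mul (g f : ℝ → ℂ) (c : ℂ) (x ω : ℝ) :
    STFT g (fun t => c * f t) x ω = c * STFT g f x ω := by
  simp only [STFT, mul_assoc, integral_const_mul]

theorem STFT_translate (g f : ℝ → ℂ) (ξ x ω : ℝ) :
    STFT g (fun t => f (t - ξ)) x ω =
      Complex.exp (-2 * Real.pi * Complex.I * ξ * ω) * STFT g f (x - ξ) ω := by
  rw [STFT, ← integral_add_right_eq_self _ ξ, STFT, ← integral_const_mul]
  congr 1 with t
  have shift : t + ξ - x = t - (x - ξ) := by ring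
  have phase : Complex.exp (-2 * Real.pi * Complex.I * ω * (t + ξ : ℝ)) =
      Complex.exp (-2 * Real.pi * Complex.I * ξ * ω) *
        Complex.exp (-2 * Real.pi * Complex.I * ω * t) := by
    rw [← Complex.exp_add]
    push_cast
    ring_nf
  rw [add_sub_cancel_right, shift, phase]
  ring

theorem STFT_modulate (g f : ℝ → ℂ) (ν x ω : ℝ) :
    STFT g (fun t => Complex.exp (2 * Real.pi * Complex.I * ν * t) * f t) x ω =
      STFT g f x (ω - ν) := by
  simp only [STFT]
  congr 1 with t
  have phase : Complex.exp (-2 * Real.pi * Complex.I * (ω - ν : ℝ) * t) =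
      Complex.exp (2 * Real.pi * Complex.I * ν * t) *
        Complex.exp (-2 * Real.pi * Complex.I * ω * t) := by
    rw [← Complex.exp_add]
    push_cast
    ring_nf
  rw [phase]
  ring

theorem norm_rhoA (a b p t : ℝ) : ‖rhoA a b p t‖ = 1 := by
  have purely_imaginary : (Real.pi * Complex.I / b) * (a * t ^ 2 + 2 * p * t) =
      ((Real.pi / b * (a * t ^ 2 + 2 * p * t) : ℝ) : ℂ) * Complex.I := by
    push_cast
    ring
  rw [rhoA, purely_imaginary, Complex.norm_exp_ofReal_mul_I]

theorem A_translate_A_modulate_eq_rhoA_mul (a b p ξ η : ℝ) (f : ℝ → ℂ) (t : ℝ) :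
    Complex.exp (-2 * Real.pi * Complex.I * (a / b) * ξ * (t - ξ)) *
        (Complex.exp ((Real.pi * Complex.I / b) *
          (a * η ^ 2 - 2 * p * η + 2 * η * (t - ξ))) * f (t - ξ)) =
      rhoA a b p (-η) *
        (Complex.exp (2 * Real.pi * Complex.I * ((η - a * ξ) / b : ℝ) * (t - ξ : ℝ)) *
          f (t - ξ)) := by
  simp only [rhoA, ← mul_assoc, ← Complex.exp_add]
  push_cast
  ring_nf

theorem STFT_A_translate_A_modulate (a b p : ℝ) (f g : ℝ → ℂ) (ξ η x ω : ℝ) :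
    STFT g
        (fun t => Complex.exp (-2 * Real.pi * Complex.I * (a / b) * ξ * (t - ξ)) *
          (Complex.exp ((Real.pi * Complex.I / b) *
            (a * η ^ 2 - 2 * p * η + 2 * η * (t - ξ))) * f (t - ξ))) x ω =
      rhoA a b p (-η) * Complex.exp (-2 * Real.pi * Complex.I * ξ * ω) *
        STFT g f (x - ξ) (ω + (a * ξ - η) / b) := by
  have frequency : ω - (η - a * ξ) / b = ω + (a * ξ - η) / b := by ring
  simp only [A_translate_A_modulate_eq_rhoA_mul]
  rw [STFT_const_mul,
    STFT_translate g
      (fun s => Complex.exp (2 * Real.pi * Complex.I * ((η - a * ξ) / b : ℝ) * s) * f s),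
    STFT_modulate, frequency, ← mul_assoc]

theorem STFT_A_covariance_general (a b p : ℝ) (f g : ℝ → ℂ) (ξ η x ω : ℝ) :
    STFT g
        (fun t => Complex.exp (-2 * Real.pi * Complex.I * (a / b) * ξ * (t - ξ)) *
          (Complex.exp ((Real.pi * Complex.I / b) *
            (a * η ^ 2 - 2 * p * η + 2 * η * (t - ξ))) * f (t - ξ))) x ω =
      rhoA a b p (-η) * Complex.exp (-2 * Real.pi * Complex.I * ξ * ω) *
        STFT g f (x - ξ) (ω + (a * ξ - η) / b) ∧
    ‖STFT g
        (fun t => Complex.exp (-2 * Real.pi * Complex.I * (a / b) * ξ * (t - ξ)) *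
          (Complex.exp ((Real.pi * Complex.I / b) *
            (a * η ^ 2 - 2 * p * η + 2 * η * (t - ξ))) * f (t - ξ))) x ω‖ =
      ‖STFT g f (x - ξ) (ω + (a * ξ - η) / b)‖ := by
  have norm_phase : ‖Complex.exp (-2 * Real.pi * Complex.I * ξ * ω)‖ = 1 := by
    simp [Complex.norm_exp]
  refine ⟨STFT_A_translate_A_modulate a b p f g ξ η x ω, ?_⟩
  rw [STFT_A_translate_A_modulate, norm_mul, norm_mul, norm_rhoA, norm_phase, one_mul, one_mul]

/-- Covariance of the STFT under A-translation and A-modulation. -/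
theorem STFT_A_covariance (a b p : ℝ) (hb : b ≠ 0) (f g : ℝ → ℂ)
    (hf : MemLp f 2 volume) (hg : MemLp g 2 volume) (ξ η x ω : ℝ) :
    STFT g
        (fun t => Complex.exp (-2 * Real.pi * Complex.I * (a / b) * ξ * (t - ξ)) *
          (Complex.exp ((Real.pi * Complex.I / b) *
            (a * η ^ 2 - 2 * p * η + 2 * η * (t - ξ))) * f (t - ξ))) x ω =
      rhoA a b p (-η) * Complex.exp (-2 * Real.pi * Complex.I * ξ * ω) *
        STFT g f (x - ξ) (ω + (a * ξ - η) / b) ∧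
    ‖STFT g
        (fun t => Complex.exp (-2 * Real.pi * Complex.I * (a / b) * ξ * (t - ξ)) *
          (Complex.exp ((Real.pi * Complex.I / b) *
            (a * η ^ 2 - 2 * p * η + 2 * η * (t - ξ))) * f (t - ξ))) x ω‖ =
      ‖STFT g f (x - ξ) (ω + (a * ξ - η) / b)‖ :=
  STFT_A_covariance_general a b p f g ξ η x ω
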